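/- The exercise region is upward closed in the DC balance: for every t ∈ {0,…,T−1}, if w > K_t and v(t,w) = w − K_t (exercise is optimal at w), then for every h > 0, v(t, w + h) = w + h − K_t (exercise remains optimal at w + h). -/

import Mathlib

open MeasureTheory ProbabilityTheory Real

/-- Salary at integer time `t`: `L_t = L₀ · e^{μ_L t}`. -/
noncomputable def salary (L0 μL : ℝ) (t : ℕ) : ℝ := L0 * Real.exp (μL * t)

/-- The ABO `K_t = b · t · L_{t−1} · ä · e^{−r(T−t)}`. -/
noncomputable def ABO (T : ℕ) (r b aT L0 μL : ℝ) (t : ℕ) : ℝ :=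
  b * t * (L0 * Real.exp (μL * ((t : ℝ) - 1))) * aT * Real.exp (-r * ((T : ℝ) - (t : ℝ)))

/-- Auxiliary value function: `bermudanAux n w` is the value at time `t = T − n`
with `n` periods to go, defined by backward induction. -/
noncomputable def bermudanAux (T : ℕ) (r σ μL c b aT L0 : ℝ) : ℕ → ℝ → ℝ
  | 0, w => max (w - ABO T r b aT L0 μL T) 0
  | n + 1, w =>
      max (max (w - ABO T r b aT L0 μL (T - (n + 1))) 0)
        (Real.exp (-r) *
          ∫ z, bermudanAux T r σ μL c b aT L0 n
              ((w + c * salary L0 μL (T - (n + 1))) * Real.exp (r - σ ^ 2 / 2 + σ * z))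
            ∂(gaussianReal 0 1))

/-- The discrete-time value function of the Bermudan DB underpin option:
`v(T,w) = max(w − K_T, 0)` and for `t < T`,
`v(t,w) = max( max(w − K_t, 0), e^{−r} ∫ v(t+1, (w + c·L_t)·e^{r−σ²/2+σz}) γ(dz) )`. -/
noncomputable def bermudanValue (T : ℕ) (r σ μL c b aT L0 : ℝ) (t : ℕ) (w : ℝ) : ℝ :=
  bermudanAux T r σ μL c b aT L0 (T - t) w

open scoped NNReal

/-! The value function is nondecreasing and 1-Lipschitz in the balance at every date: both
properties survive `max` with the exercise value, and they survive the discounted expectation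
because the discounted growth factor `e^{-r} e^{r - σ²/2 + σZ}` has mean one. Hence once exercise
is optimal at `w`, `v(t, w + h) ≤ v(t, w) + h = w + h - K_t`, while `v(t, ·)` dominates the
exercise value anyway. -/

/-- Equivalent to `Monotone f ∧ LipschitzWith 1 f`; this form is visibly stable under `max`. -/
def MonotoneOneLipschitz (f : ℝ → ℝ) : Prop :=
  Monotone f ∧ Monotone fun x => x - f x

namespace MonotoneOneLipschitz

variable {f g : ℝ → ℝ}

theorem le_add (hf : MonotoneOneLipschitz f) {x y : ℝ} (hxy : x ≤ y) : f y ≤ f x + (y - x) := by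
  linarith [hf.2 hxy]

theorem lipschitzWith (hf : MonotoneOneLipschitz f) : LipschitzWith 1 f := by
  refine LipschitzWith.of_le_add fun x y => ?_
  rcases le_total x y with hxy | hyx
  · linarith [hf.1 hxy, dist_nonneg (x := x) (y := y)]
  · linarith [hf.le_add hyx, Real.dist_eq x y, le_abs_self (x - y)]

theorem sub_self (hf : MonotoneOneLipschitz f) : MonotoneOneLipschitz fun x => x - f x :=
  ⟨hf.2, by simpa only [sub_sub_cancel] using hf.1⟩

theorem max (hf : MonotoneOneLipschitz f) (hg : MonotoneOneLipschitz g) :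
    MonotoneOneLipschitz fun x => max (f x) (g x) := by
  refine ⟨hf.1.max hg.1, ?_⟩
  simpa only [sub_sup] using hf.2.min hg.2

end MonotoneOneLipschitz

theorem monotoneOneLipschitz_const (k : ℝ) : MonotoneOneLipschitz fun _ => k :=
  ⟨monotone_const, fun _ _ h => sub_le_sub_right h k⟩

theorem monotoneOneLipschitz_sub_const (k : ℝ) : MonotoneOneLipschitz fun x => x - k :=
  ⟨fun _ _ h => sub_le_sub_right h k, by simpa only [sub_sub_cancel] using monotone_const⟩

theorem LipschitzWith.integrable_comp {α E F : Type*} [MeasurableSpace α] {μ : Measure α}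
    [IsFiniteMeasure μ] [NormedAddCommGroup E] [NormedAddCommGroup F] {K : ℝ≥0} {g : E → F}
    (hg : LipschitzWith K g) {f : α → E} (hf : Integrable f μ) : Integrable (g ∘ f) μ := by
  refine ((hf.norm.const_mul K).add (integrable_const ‖g 0‖)).mono'
    (hg.continuous.comp_aestronglyMeasurable hf.1) (ae_of_all _ fun x => ?_)
  have := hg.norm_sub_le (f x) 0
  rw [sub_zero] at this
  simp only [Function.comp_apply, Pi.add_apply]
  linarith [norm_sub_norm_le (g (f x)) (g 0)]

section Continuation

variable {Ω : Type*} [MeasurableSpace Ω] {μ : Measure Ω} [IsFiniteMeasure μ] {G : Ω → ℝ}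
  {f : ℝ → ℝ}

/-- In `bermudanAux`, the continuation value at date `t` is
`continuationValue γ (e^{-r}) (c L_t) (fun z => e^{r - σ²/2 + σ z}) v(t+1, ·)`. -/
noncomputable def continuationValue (μ : Measure Ω) (D a : ℝ) (G : Ω → ℝ) (f : ℝ → ℝ) (w : ℝ) :
    ℝ :=
  D * ∫ z, f ((w + a) * G z) ∂μ

theorem MonotoneOneLipschitz.monotone_integral_comp_mul (hf : MonotoneOneLipschitz f)
    (hG : 0 ≤ G) (hGi : Integrable G μ) : Monotone fun u => ∫ z, f (u * G z) ∂μ :=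
  fun x y hxy => integral_mono (hf.lipschitzWith.integrable_comp (hGi.const_mul x))
    (hf.lipschitzWith.integrable_comp (hGi.const_mul y))
    fun z => hf.1 (mul_le_mul_of_nonneg_right hxy (hG z))

theorem monotoneOneLipschitz_continuationValue (hf : MonotoneOneLipschitz f) (hG : 0 ≤ G)
    (hGi : Integrable G μ) {D : ℝ} (hD : D * ∫ z, G z ∂μ = 1) (a : ℝ) :
    MonotoneOneLipschitz (continuationValue μ D a G f) := by
  have hD₀ : 0 ≤ D := by nlinarith [integral_nonneg (μ := μ) hG]
  -- `D · E[(w + a) G] = w + a` moves `w` inside the expectation.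
  have hsub : ∀ w, w - continuationValue μ D a G f w
      = D * ∫ z, ((w + a) * G z - f ((w + a) * G z)) ∂μ - a := by
    intro w
    have hfi : Integrable (fun z => f ((w + a) * G z)) μ :=
      hf.lipschitzWith.integrable_comp (hGi.const_mul (w + a))
    rw [integral_sub (hGi.const_mul (w + a)) hfi, integral_const_mul, continuationValue]
    linear_combination -(w + a) * hD
  have hmono := hf.monotone_integral_comp_mul hG hGi
  have hmono_sub := hf.sub_self.monotone_integral_comp_mul hG hGi
  refine ⟨fun x y hxy => ?_, fun x y hxy => ?_⟩
  · exact mul_le_mul_of_nonneg_left (hmono (by linarith : x + a ≤ y + a)) hD₀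
  · simp only [hsub]
    exact sub_le_sub_right (mul_le_mul_of_nonneg_left (hmono_sub (by linarith)) hD₀) a

end Continuation

theorem integrable_exp_add_mul_gaussianReal (μ : ℝ) (v : ℝ≥0) (m s : ℝ) :
    Integrable (fun z => exp (m + s * z)) (gaussianReal μ v) := by
  simpa only [exp_add] using (integrable_exp_mul_gaussianReal s).const_mul (exp m)

theorem integral_exp_add_mul_gaussianReal (μ : ℝ) (v : ℝ≥0) (m s : ℝ) :
    ∫ z, exp (m + s * z) ∂gaussianReal μ v = exp (m + μ * s + v * s ^ 2 / 2) := by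
  have hmgf := congrFun (mgf_fun_id_gaussianReal (μ := μ) (v := v)) s
  rw [mgf] at hmgf
  simp only [exp_add, integral_const_mul, hmgf, mul_assoc]

theorem monotoneOneLipschitz_bermudanAux (T : ℕ) (r σ μL c b aT L0 : ℝ) (n : ℕ) :
    MonotoneOneLipschitz (bermudanAux T r σ μL c b aT L0 n) := by
  have hexercise (k : ℝ) : MonotoneOneLipschitz fun w => max (w - k) 0 :=
    (monotoneOneLipschitz_sub_const k).max (monotoneOneLipschitz_const 0)
  induction n with
  | zero => exact hexercise _
  | succ n ih =>
    have hmean : exp (-r) * ∫ z, exp (r - σ ^ 2 / 2 + σ * z) ∂gaussianReal 0 1 = 1 := by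
      rw [integral_exp_add_mul_gaussianReal, ← exp_add]
      simp
    exact (hexercise _).max (monotoneOneLipschitz_continuationValue ih (fun z => (exp_pos _).le)
      (integrable_exp_add_mul_gaussianReal 0 1 _ σ) hmean _)

theorem sub_ABO_le_bermudanValue (T : ℕ) (r σ μL c b aT L0 : ℝ) {t : ℕ} (ht : t ≤ T) (w : ℝ) :
    w - ABO T r b aT L0 μL t ≤ bermudanValue T r σ μL c b aT L0 t w := by
  rw [bermudanValue]
  rcases hn : T - t with _ | n
  · obtain rfl : t = T := by omega
    exact le_max_left _ _
  · rw [bermudanAux, ← hn, Nat.sub_sub_self ht]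
    exact (le_max_left _ _).trans (le_max_left _ _)

theorem bermudanValue_exercise_upward_closed_general (T : ℕ) (r σ μL c b aT L0 : ℝ) (t : ℕ) (ht : t < T)
    (w : ℝ) (hex : bermudanValue T r σ μL c b aT L0 t w = w - ABO T r b aT L0 μL t)
    (h : ℝ) (hh : 0 < h) :
    bermudanValue T r σ μL c b aT L0 t (w + h) = w + h - ABO T r b aT L0 μL t := by
  have h_upper := (monotoneOneLipschitz_bermudanAux T r σ μL c b aT L0 (T - t)).le_add
    (by linarith : w ≤ w + h)
  have h_lower := sub_ABO_le_bermudanValue T r σ μL c b aT L0 ht.le (w + h)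
  rw [bermudanValue] at hex h_lower ⊢
  linarith

/-- The exercise region is upward closed in the DC balance: for `t ∈ {0,…,T−1}`,
if `w > K_t` and `v(t,w) = w − K_t`, then for every `h > 0`,
`v(t, w+h) = w + h − K_t`. -/
theorem bermudanValue_exercise_upward_closed (T : ℕ) (hT : 1 ≤ T) (r σ μL c b aT L0 : ℝ)
    (hr : 0 ≤ r) (hσ : 0 < σ) (hμL : 0 ≤ μL) (hc : 0 < c) (hb : 0 < b)
    (haT : 0 < aT) (hL0 : 0 < L0) (t : ℕ) (ht : t < T) (w : ℝ)
    (hw : ABO T r b aT L0 μL t < w)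
    (hex : bermudanValue T r σ μL c b aT L0 t w = w - ABO T r b aT L0 μL t)
    (h : ℝ) (hh : 0 < h) :
    bermudanValue T r σ μL c b aT L0 t (w + h) = w + h - ABO T r b aT L0 μL t :=
  bermudanValue_exercise_upward_closed_general T r σ μL c b aT L0 t ht w hex h hh
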